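/- Let (B, 𝓛, δ) be an instance of polyline bundle simplification with an orientation fixed for each polyline, and let C be a star cover for it. Let B_central be the set of central bends of the stars in C and let B_first be the set of first bends of all polylines in 𝓛. Then B_central ∪ B_first is a valid simplification of the relaxed instance (B, 𝓛, 2δ): for each polyline L ∈ 𝓛, the simplification of L induced by B_central ∪ B_first contains the start and end point of L, and every segment (b_i, b_j) of this induced simplification has Fréchet distance at most 2δ to the corresponding sub-polyline L[b_i, …, b_j]. Moreover, if |C| ≤ α·OPT_StCo for some α ≥ 1, then |B_central ∪ B_first| ≤ (α + 1)·OPT_PBS. -/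

import Mathlib

/-- Points of the Euclidean plane. -/
abbrev Pt := EuclideanSpace ℝ (Fin 2)

/-- The arc parametrization `c_L : [1, m] → ℝ²` of a polyline given by the list `L` of
its `m` bend points (1-based indexing):
`c_L(x) = (⌊x⌋ + 1 − x)·b_⌊x⌋ + (x − ⌊x⌋)·b_⌈x⌉`. -/
noncomputable def arcParam (L : List Pt) (x : ℝ) : Pt :=
  ((⌊x⌋₊ : ℝ) + 1 - x) • L.getD (⌊x⌋₊ - 1) 0 + (x - (⌊x⌋₊ : ℝ)) • L.getD (⌈x⌉₊ - 1) 0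

/-- The Fréchet distance between two polylines `L₁, L₂` (lists of points in the plane). -/
noncomputable def frechetDist (L₁ L₂ : List Pt) : ℝ :=
  sInf { d : ℝ | ∃ α β : ℝ → ℝ,
    ContinuousOn α (Set.Icc 0 1) ∧ ContinuousOn β (Set.Icc 0 1) ∧
    MonotoneOn α (Set.Icc 0 1) ∧ MonotoneOn β (Set.Icc 0 1) ∧
    α 0 = 1 ∧ β 0 = 1 ∧ α 1 = L₁.length ∧ β 1 = L₂.length ∧
    d = sSup { e : ℝ | ∃ t ∈ Set.Icc (0 : ℝ) 1,
          e = ‖arcParam L₁ (α t) - arcParam L₂ (β t)‖ } }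

/-- A polyline: a list of at least two bend points in which each bend appears at most
once. -/
structure Polyline where
  pts : List Pt
  two_le : 2 ≤ pts.length
  nodup : pts.Nodup

/-- An instance `(B, 𝓛, δ)` of polyline bundle simplification: a finite set `B` of bend
points, a bundle of `numLines` polylines whose bends all belong to `B`, and a positive
distance threshold `δ`. -/
structure PBSInstance where
  B : Finset Pt
  numLines : ℕ
  line : Fin numLines → Polyline
  δ : ℝ
  δ_pos : 0 < δ
  bends_mem : ∀ i : Fin numLines, ∀ p ∈ (line i).pts, p ∈ B

/-- `(u, v)` (0-based indices into `L`) is a valid shortcut of the polyline `L` with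
threshold `δ`: `u` comes before `v` and the Fréchet distance between the line segment
from `L[u]` to `L[v]` and the sub-polyline `L[u..v]` is at most `δ`. -/
def IsShortcut (δ : ℝ) (L : List Pt) (u v : ℕ) : Prop :=
  u < v ∧ v < L.length ∧
    frechetDist [L.getD u 0, L.getD v 0] ((L.drop u).take (v - u + 1)) ≤ δ

/-- `B'` is a valid simplification of the PBS instance `I` with threshold `δ`: `B' ⊆ B`,
every polyline keeps its start and end point, and every segment of the induced
simplification (i.e. every pair of retained bends with no retained bend in between) has
Fréchet distance at most `δ` to the corresponding sub-polyline. -/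
def IsValidSimplification (I : PBSInstance) (δ : ℝ) (B' : Set Pt) : Prop :=
  B' ⊆ ↑I.B ∧ ∀ i : Fin I.numLines,
    (I.line i).pts.getD 0 0 ∈ B' ∧
    (I.line i).pts.getD ((I.line i).pts.length - 1) 0 ∈ B' ∧
    ∀ p q : ℕ, p < q → q < (I.line i).pts.length →
      (I.line i).pts.getD p 0 ∈ B' → (I.line i).pts.getD q 0 ∈ B' →
      (∀ r : ℕ, p < r → r < q → (I.line i).pts.getD r 0 ∉ B') →
      frechetDist [(I.line i).pts.getD p 0, (I.line i).pts.getD q 0]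
        (((I.line i).pts.drop p).take (q - p + 1)) ≤ δ

/-- `OPT_PBS`: the minimum size of a valid simplification of the instance `I`. -/
noncomputable def optPBS (I : PBSInstance) : ℕ :=
  sInf { k : ℕ | ∃ B' : Set Pt, IsValidSimplification I I.δ B' ∧ B'.ncard = k }

/-- The `i`-th polyline of `I` after fixing an orientation: either the polyline itself or
its reversal. -/
def orientedLine (I : PBSInstance) (ori : Fin I.numLines → Bool) (i : Fin I.numLines) :
    List Pt :=
  if ori i then (I.line i).pts else (I.line i).pts.reverse

/-- A star: a central bend `central ∈ B` together with, for each polyline containing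
`central`, at most one incoming shortcut `(u, central)` (with respect to the fixed
orientations). -/
structure PBSStar (I : PBSInstance) (ori : Fin I.numLines → Bool) where
  central : Pt
  central_mem : central ∈ I.B
  sc : Fin I.numLines → Option ℕ
  sc_spec : ∀ i : Fin I.numLines, ∀ u : ℕ, sc i = some u →
    ∃ v : ℕ, v < (orientedLine I ori i).length ∧
      (orientedLine I ori i).getD v 0 = central ∧
      IsShortcut I.δ (orientedLine I ori i) u v

/-- The star `s` covers the segment–polyline pair given by polyline `i` and the segment
between positions `k` and `k+1` of the oriented polyline: `s` contains a shortcut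
`(u, central)` of polyline `i` and the segment lies between `u` and the position of
`central`. -/
def PBSStar.covers {I : PBSInstance} {ori : Fin I.numLines → Bool} (s : PBSStar I ori)
    (i : Fin I.numLines) (k : ℕ) : Prop :=
  ∃ u : ℕ, s.sc i = some u ∧
    ∃ v : ℕ, v < (orientedLine I ori i).length ∧
      (orientedLine I ori i).getD v 0 = s.central ∧ u ≤ k ∧ k < v

/-- A star cover: a set of stars covering all segment–polyline pairs of the instance. -/
def IsStarCover (I : PBSInstance) (ori : Fin I.numLines → Bool)
    (C : Set (PBSStar I ori)) : Prop :=
  ∀ i : Fin I.numLines, ∀ k : ℕ, k + 1 < (orientedLine I ori i).length →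
    ∃ s ∈ C, s.covers i k

/-- `OPT_StCo`: the minimum size of a star cover of the instance `I` with fixed
orientations `ori`. -/
noncomputable def optStCo (I : PBSInstance) (ori : Fin I.numLines → Bool) : ℕ :=
  sInf { k : ℕ | ∃ C : Set (PBSStar I ori), C.Finite ∧ IsStarCover I ori C ∧ C.ncard = k }

/-!
Every segment `(s, t)` of the simplification induced by the central and first bends lies inside
a shortcut `(u, v)` of the star covering the polyline segment that starts at `s`: its centre
`v` is retained, so `t ≤ v`. Sub-polylines of a polyline that is `δ`-close to a segment are
`2δ`-close to their own shortcuts, which gives the threshold `2δ`. For the size bound, the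
first bends lie in every valid simplification, and an optimal simplification `B₀` yields a star
cover with one star per bend of `B₀`, so `OPT_StCo ≤ OPT_PBS`.
-/

open Set AffineMap

section ArcParam

lemma arcParam_natCast (L : List Pt) (n : ℕ) : arcParam L n = L.getD (n - 1) 0 := by
  simp [arcParam]

lemma arcParam_eq_lineMap (L : List Pt) (k : ℕ) {x : ℝ} (h₁ : k ≤ x) (h₂ : x ≤ k + 1) :
    arcParam L x = lineMap (L.getD (k - 1) 0) (L.getD k 0) (x - k) := by
  rcases h₂.eq_or_lt with rfl | h₂
  · simpa using arcParam_natCast L (k + 1)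
  rcases h₁.eq_or_lt with rfl | h₁
  · simpa using arcParam_natCast L k
  have hfl : ⌊x⌋₊ = k := (Nat.floor_eq_iff ((Nat.cast_nonneg k).trans h₁.le)).2 ⟨h₁.le, h₂⟩
  have hcl : ⌈x⌉₊ = k + 1 := (Nat.ceil_eq_iff (by omega)).2 ⟨by simpa, by push_cast; linarith⟩
  rw [arcParam, hfl, hcl, Nat.add_sub_cancel, lineMap_apply_module]
  congr 2
  ring

lemma arcParam_pair (p q : Pt) {x : ℝ} (h₁ : 1 ≤ x) (h₂ : x ≤ 2) :
    arcParam [p, q] x = lineMap p q (x - 1) := by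
  simpa using arcParam_eq_lineMap [p, q] 1 (by simpa) (by norm_num; linarith)

lemma arcParam_reverse (L : List Pt) {x : ℝ} (h₁ : 1 ≤ x) (h₂ : x ≤ L.length) :
    arcParam L.reverse (L.length + 1 - x) = arcParam L x := by
  rcases h₁.eq_or_lt with rfl | h₁
  · have hn : 1 ≤ L.length := by exact_mod_cast h₂
    rw [add_sub_cancel_right, arcParam_natCast, List.getD_reverse _ (by omega),
      show L.length - 1 - (L.length - 1) = 0 by omega]
    simpa using (arcParam_natCast L 1).symm
  set k := ⌈x⌉₊ - 1
  have hk : 1 ≤ k := by have := Nat.lt_ceil.2 (by exact_mod_cast h₁ : ((1 : ℕ) : ℝ) < x); omega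
  have hkn : k < L.length := by have := Nat.ceil_le.2 h₂; omega
  have hkx : (k : ℝ) + 1 = ⌈x⌉₊ := by rw [← Nat.cast_succ]; congr 1; omega
  have hxk : x ≤ k + 1 := hkx ▸ Nat.le_ceil x
  have hkx' : (k : ℝ) ≤ x := by linarith [Nat.ceil_lt_add_one (by linarith : (0 : ℝ) ≤ x)]
  rw [arcParam_eq_lineMap L k hkx' hxk,
    arcParam_eq_lineMap L.reverse (L.length - k) (by push_cast [hkn.le]; linarith)
      (by push_cast [hkn.le]; linarith),
    List.getD_reverse _ (by omega), List.getD_reverse _ (by omega),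
    ← lineMap_apply_one_sub, show L.length - 1 - (L.length - k - 1) = k by omega,
    show L.length - 1 - (L.length - k) = k - 1 by omega]
  congr 1
  push_cast [hkn.le]
  ring

lemma arcParam_drop (L : List Pt) (w : ℕ) {y : ℝ} (hy : 1 ≤ y) :
    arcParam (L.drop w) y = arcParam L (y + w) := by
  have hfl : 1 ≤ ⌊y⌋₊ := Nat.le_floor (by simpa)
  have hcl : 1 ≤ ⌈y⌉₊ := Nat.one_le_ceil_iff.2 (by linarith)
  simp only [arcParam, Nat.floor_add_natCast (by linarith : 0 ≤ y),
    Nat.ceil_add_natCast (by linarith : 0 ≤ y), List.getD_eq_getElem?_getD, List.getElem?_drop]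
  rw [show w + (⌊y⌋₊ - 1) = ⌊y⌋₊ + w - 1 by omega, show w + (⌈y⌉₊ - 1) = ⌈y⌉₊ + w - 1 by omega]
  push_cast
  congr 2 <;> ring

lemma arcParam_take (L : List Pt) {m : ℕ} {y : ℝ} (hy : 1 ≤ y) (hym : y ≤ m) :
    arcParam (L.take m) y = arcParam L y := by
  have hcl : ⌈y⌉₊ ≤ m := Nat.ceil_le.2 hym
  have hfl : ⌊y⌋₊ ≤ ⌈y⌉₊ := Nat.floor_le_ceil y
  have hm : 1 ≤ m := by exact_mod_cast hy.trans hym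
  simp only [arcParam, List.getD_eq_getElem?_getD,
    List.getElem?_take_of_lt (by omega : ⌊y⌋₊ - 1 < m),
    List.getElem?_take_of_lt (by omega : ⌈y⌉₊ - 1 < m)]

lemma exists_norm_arcParam_le (L : List Pt) : ∃ R, ∀ x, 0 ≤ x → ‖arcParam L x‖ ≤ R := by
  obtain ⟨R, hR⟩ := ((List.finite_toSet L).insert 0).isBounded.exists_norm_le
  have hget (n : ℕ) : L.getD n 0 ∈ Metric.closedBall 0 R := by
    refine mem_closedBall_zero_iff.2 (hR _ ?_)
    rcases lt_or_ge n L.length with h | h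
    · exact Or.inr (List.getD_eq_getElem _ _ h ▸ List.getElem_mem h)
    · exact Or.inl (List.getD_eq_default _ _ h)
  refine ⟨R, fun x hx => mem_closedBall_zero_iff.1 ?_⟩
  exact convex_closedBall 0 R (hget _) (hget _) (by linarith [Nat.lt_floor_add_one x])
    (by linarith [Nat.floor_le hx]) (by ring)

end ArcParam

lemma exists_monotone_reparam {n : ℕ} (hn : 0 < n) :
    ∃ γ : ℝ → ℝ, Continuous γ ∧ Monotone γ ∧ γ 0 = 1 ∧ γ 1 = n := by
  have : (1 : ℝ) ≤ n := by exact_mod_cast hn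
  exact ⟨fun t => 1 + t * (n - 1), by fun_prop, fun s t hst => by dsimp only; nlinarith,
    by simp, by simp⟩

/-- Reparametrizations over the time interval `[a, b]` along which `L₁` and `L₂` stay
`c`-close; `frechetDist` is the infimum of such `c` over `[0, 1]`. -/
structure FrechetMatching (L₁ L₂ : List Pt) (a b c : ℝ) where
  α : ℝ → ℝ
  β : ℝ → ℝ
  continuousOn_α : ContinuousOn α (Icc a b)
  continuousOn_β : ContinuousOn β (Icc a b)
  monotoneOn_α : MonotoneOn α (Icc a b)
  monotoneOn_β : MonotoneOn β (Icc a b)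
  α_left : α a = 1
  β_left : β a = 1
  α_right : α b = L₁.length
  β_right : β b = L₂.length
  norm_sub_le : ∀ t ∈ Icc a b, ‖arcParam L₁ (α t) - arcParam L₂ (β t)‖ ≤ c

namespace FrechetMatching

variable {L₁ L₂ : List Pt} {a b c : ℝ}

lemma α_mem_Icc (m : FrechetMatching L₁ L₂ a b c) {t : ℝ} (ht : t ∈ Icc a b) :
    m.α t ∈ Icc 1 (L₁.length : ℝ) := by
  have hab : a ≤ b := ht.1.trans ht.2
  rw [← m.α_left, ← m.α_right]
  exact ⟨m.monotoneOn_α (left_mem_Icc.2 hab) ht ht.1, m.monotoneOn_α ht (right_mem_Icc.2 hab) ht.2⟩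

lemma β_mem_Icc (m : FrechetMatching L₁ L₂ a b c) {t : ℝ} (ht : t ∈ Icc a b) :
    m.β t ∈ Icc 1 (L₂.length : ℝ) := by
  have hab : a ≤ b := ht.1.trans ht.2
  rw [← m.β_left, ← m.β_right]
  exact ⟨m.monotoneOn_β (left_mem_Icc.2 hab) ht ht.1, m.monotoneOn_β ht (right_mem_Icc.2 hab) ht.2⟩

theorem frechetDist_le (m : FrechetMatching L₁ L₂ a b c) (hab : a ≤ b) :
    frechetDist L₁ L₂ ≤ c := by
  set φ : ℝ → ℝ := fun t => a + t * (b - a)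
  have hφ : MapsTo φ (Icc 0 1) (Icc a b) := fun t ht =>
    ⟨by nlinarith [ht.1], by nlinarith [ht.2]⟩
  have hφmono : MonotoneOn φ (Icc 0 1) := fun s _ t _ hst => by
    simp only [φ]; nlinarith
  have hφcont : ContinuousOn φ (Icc 0 1) := by fun_prop
  refine csInf_le_of_le ⟨0, ?_⟩ ⟨m.α ∘ φ, m.β ∘ φ, m.continuousOn_α.comp hφcont hφ,
      m.continuousOn_β.comp hφcont hφ, m.monotoneOn_α.comp hφmono hφ,
      m.monotoneOn_β.comp hφmono hφ, by simpa [φ] using m.α_left,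
      by simpa [φ] using m.β_left, by simpa [φ] using m.α_right, by simpa [φ] using m.β_right,
      rfl⟩ (csSup_le ⟨_, 0, left_mem_Icc.2 zero_le_one, rfl⟩ ?_)
  · rintro d ⟨α, β, -, -, -, -, -, -, -, -, rfl⟩
    exact Real.sSup_nonneg fun e ⟨t, _, he⟩ => he ▸ norm_nonneg _
  · rintro e ⟨t, ht, rfl⟩
    exact m.norm_sub_le _ (hφ ht)

def reverse (m : FrechetMatching L₁ L₂ a b c) :
    FrechetMatching L₁.reverse L₂.reverse (-b) (-a) c where
  α t := L₁.length + 1 - m.α (-t)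
  β t := L₂.length + 1 - m.β (-t)
  continuousOn_α := continuousOn_const.sub (m.continuousOn_α.comp continuousOn_neg
    fun t ht => ⟨le_neg.2 ht.2, neg_le.2 ht.1⟩)
  continuousOn_β := continuousOn_const.sub (m.continuousOn_β.comp continuousOn_neg
    fun t ht => ⟨le_neg.2 ht.2, neg_le.2 ht.1⟩)
  monotoneOn_α s hs t ht hst := sub_le_sub_left (m.monotoneOn_α ⟨le_neg.2 ht.2, neg_le.2 ht.1⟩
    ⟨le_neg.2 hs.2, neg_le.2 hs.1⟩ (neg_le_neg hst)) _
  monotoneOn_β s hs t ht hst := sub_le_sub_left (m.monotoneOn_β ⟨le_neg.2 ht.2, neg_le.2 ht.1⟩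
    ⟨le_neg.2 hs.2, neg_le.2 hs.1⟩ (neg_le_neg hst)) _
  α_left := by simp [m.α_right]
  β_left := by simp [m.β_right]
  α_right := by simp [m.α_left]
  β_right := by simp [m.β_left]
  norm_sub_le t ht := by
    have ht' : -t ∈ Icc a b := ⟨le_neg.2 ht.2, neg_le.2 ht.1⟩
    rw [arcParam_reverse L₁ (m.α_mem_Icc ht').1 (m.α_mem_Icc ht').2,
      arcParam_reverse L₂ (m.β_mem_Icc ht').1 (m.β_mem_Icc ht').2]
    exact m.norm_sub_le _ ht'

lemma nonempty_refl {L : List Pt} (hL : L ≠ []) : Nonempty (FrechetMatching L L 0 1 0) := by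
  obtain ⟨γ, hc, hm, h0, h1⟩ := exists_monotone_reparam (List.length_pos_iff.2 hL)
  exact ⟨⟨γ, γ, hc.continuousOn, hc.continuousOn, hm.monotoneOn _, hm.monotoneOn _, h0, h0,
    h1, h1, fun t _ => by simp⟩⟩

lemma nonempty_of_frechetDist_lt (h₁ : L₁ ≠ []) (h₂ : L₂ ≠ []) (h : frechetDist L₁ L₂ < c) :
    Nonempty (FrechetMatching L₁ L₂ 0 1 c) := by
  obtain ⟨γ₁, hc₁, hm₁, h0₁, h1₁⟩ := exists_monotone_reparam (List.length_pos_iff.2 h₁)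
  obtain ⟨γ₂, hc₂, hm₂, h0₂, h1₂⟩ := exists_monotone_reparam (List.length_pos_iff.2 h₂)
  obtain ⟨d, ⟨α, β, hcα, hcβ, hmα, hmβ, h0α, h0β, h1α, h1β, rfl⟩, hd⟩ :=
    exists_lt_of_csInf_lt (by exact ⟨_, γ₁, γ₂, hc₁.continuousOn, hc₂.continuousOn,
      hm₁.monotoneOn _, hm₂.monotoneOn _, h0₁, h0₂, h1₁, h1₂, rfl⟩) h
  refine ⟨⟨α, β, hcα, hcβ, hmα, hmβ, h0α, h0β, h1α, h1β, fun t ht => ?_⟩⟩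
  obtain ⟨R₁, hR₁⟩ := exists_norm_arcParam_le L₁
  obtain ⟨R₂, hR₂⟩ := exists_norm_arcParam_le L₂
  have hpos {γ : ℝ → ℝ} (hγ : MonotoneOn γ (Icc 0 1)) (h0 : γ 0 = 1) {s}
      (hs : s ∈ Icc (0 : ℝ) 1) : 0 ≤ γ s := by
    linarith [h0 ▸ hγ (left_mem_Icc.2 zero_le_one) hs hs.1]
  have hbdd : BddAbove {e : ℝ | ∃ s ∈ Icc (0 : ℝ) 1,
      e = ‖arcParam L₁ (α s) - arcParam L₂ (β s)‖} := by
    refine ⟨R₁ + R₂, ?_⟩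
    rintro e ⟨s, hs, rfl⟩
    exact (_root_.norm_sub_le _ _).trans
      (add_le_add (hR₁ _ (hpos hmα h0α hs)) (hR₂ _ (hpos hmβ h0β hs)))
  exact (le_csSup hbdd ⟨t, ht, rfl⟩).trans hd.le

end FrechetMatching

lemma frechetDist_reverse_le {L₁ L₂ : List Pt} (h₁ : L₁ ≠ []) (h₂ : L₂ ≠ []) :
    frechetDist L₁.reverse L₂.reverse ≤ frechetDist L₁ L₂ :=
  le_of_forall_gt_imp_ge_of_dense fun _ hc =>
    let ⟨m⟩ := FrechetMatching.nonempty_of_frechetDist_lt h₁ h₂ hc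
    m.reverse.frechetDist_le (by norm_num)

lemma exists_ordered_preimages_of_continuousOn {f : ℝ → ℝ} {a b y₁ y₂ : ℝ} (hab : a ≤ b)
    (hf : ContinuousOn f (Icc a b)) (h₁ : f a ≤ y₁) (h₁₂ : y₁ ≤ y₂) (h₂ : y₂ ≤ f b) :
    ∃ r₁ r₂, a ≤ r₁ ∧ r₁ ≤ r₂ ∧ r₂ ≤ b ∧ f r₁ = y₁ ∧ f r₂ = y₂ := by
  obtain ⟨r₂, ⟨har₂, hr₂b⟩, hfr₂⟩ := intermediate_value_Icc hab hf ⟨h₁.trans h₁₂, h₂⟩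
  obtain ⟨r₁, ⟨har₁, hr₁r₂⟩, hfr₁⟩ := intermediate_value_Icc har₂
    (hf.mono (Icc_subset_Icc_right hr₂b)) ⟨h₁, hfr₂ ▸ h₁₂⟩
  exact ⟨r₁, r₂, har₁, hr₁r₂, hr₂b, hfr₁, hfr₂⟩

lemma exists_lineMap_reparam {f : ℝ → ℝ} {a b : ℝ} (hab : a < b)
    (hf : ContinuousOn f (Icc a b)) (hmono : MonotoneOn f (Icc a b)) :
    ∃ μ : ℝ → ℝ, ContinuousOn μ (Icc a b) ∧ MonotoneOn μ (Icc a b) ∧ μ a = 0 ∧ μ b = 1 ∧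
      ∀ r ∈ Icc a b, f r = lineMap (f a) (f b) (μ r) := by
  have ha := left_mem_Icc.2 hab.le
  have hb := right_mem_Icc.2 hab.le
  rcases (hmono ha hb hab.le).eq_or_lt with hfab | hfab
  · refine ⟨fun r => (r - a) / (b - a), by fun_prop, fun s _ t _ hst => ?_, by simp,
      div_self (sub_ne_zero.2 hab.ne'), fun r hr => ?_⟩
    · exact div_le_div_of_nonneg_right (by linarith) (by linarith)
    · rw [← hfab, lineMap_same_apply]
      exact le_antisymm (hfab ▸ hmono hr hb hr.2) (hmono ha hr hr.1)
  · refine ⟨fun r => (f r - f a) / (f b - f a), by fun_prop, fun s hs t ht hst => ?_, by simp,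
      div_self (sub_ne_zero.2 hfab.ne'), fun r _ => ?_⟩
    · exact div_le_div_of_nonneg_right (by linarith [hmono hs ht hst]) (by linarith)
    · rw [lineMap_apply_ring', div_mul_cancel₀ _ (sub_ne_zero.2 hfab.ne'), sub_add_cancel]

lemma norm_lineMap_sub_lineMap_le {E : Type*} [NormedAddCommGroup E] [NormedSpace ℝ E]
    {x₁ x₂ y₁ y₂ : E} {d t : ℝ} (h₁ : ‖x₁ - y₁‖ ≤ d) (h₂ : ‖x₂ - y₂‖ ≤ d) (ht : t ∈ Icc 0 1) :
    ‖lineMap x₁ x₂ t - lineMap y₁ y₂ t‖ ≤ d := by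
  rw [← vsub_eq_sub, lineMap_vsub_lineMap, ← mem_closedBall_zero_iff]
  exact (convex_closedBall 0 d).lineMap_mem (mem_closedBall_zero_iff.2 h₁)
    (mem_closedBall_zero_iff.2 h₂) ht

namespace FrechetMatching

variable {p q : Pt} {Y : List Pt} {a b d : ℝ}

lemma arcParam_α (m : FrechetMatching [p, q] Y a b d) {t : ℝ} (ht : t ∈ Icc a b) :
    arcParam [p, q] (m.α t) = lineMap p q (m.α t - 1) :=
  arcParam_pair p q (m.α_mem_Icc ht).1 (by simpa using (m.α_mem_Icc ht).2)

lemma exists_β_eq (m : FrechetMatching [p, q] Y 0 1 d) {i j : ℕ} (hij : i < j)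
    (hj : j < Y.length) :
    ∃ r₁ r₂, 0 ≤ r₁ ∧ r₁ < r₂ ∧ r₂ ≤ 1 ∧ m.β r₁ = i + 1 ∧ m.β r₂ = j + 1 := by
  obtain ⟨r₁, r₂, hr₁, hr₁₂, hr₂, hβr₁, hβr₂⟩ :=
    exists_ordered_preimages_of_continuousOn zero_le_one m.continuousOn_β
      (y₁ := i + 1) (y₂ := j + 1) (by rw [m.β_left]; linarith [(Nat.cast_nonneg i : (0 : ℝ) ≤ i)])
      (by gcongr) (by rw [m.β_right]; exact_mod_cast hj)
  refine ⟨r₁, r₂, hr₁, hr₁₂.lt_of_ne fun h => ?_, hr₂, hβr₁, hβr₂⟩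
  rw [h, hβr₂] at hβr₁
  norm_cast at hβr₁
  omega

/-- The point of `[p, q]` matched at time `r` lies between those matched at `r₁` and `r₂`, which
are `d`-close to the points of `Y` matched there. -/
lemma norm_lineMap_sub_arcParam_le (m : FrechetMatching [p, q] Y 0 1 d) {r₁ r₂ r μ : ℝ}
    (hr₁ : r₁ ∈ Icc 0 1) (hr₂ : r₂ ∈ Icc 0 1) (hr : r ∈ Icc 0 1) (hμ : μ ∈ Icc 0 1)
    (hα : m.α r - 1 = lineMap (m.α r₁ - 1) (m.α r₂ - 1) μ) :
    ‖lineMap (arcParam Y (m.β r₁)) (arcParam Y (m.β r₂)) μ - arcParam Y (m.β r)‖ ≤ 2 * d := by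
  have hA : arcParam [p, q] (m.α r) =
      lineMap (arcParam [p, q] (m.α r₁)) (arcParam [p, q] (m.α r₂)) μ := by
    rw [m.arcParam_α hr, m.arcParam_α hr₁, m.arcParam_α hr₂, hα, apply_lineMap]
  calc _ ≤ ‖lineMap (arcParam Y (m.β r₁)) (arcParam Y (m.β r₂)) μ - arcParam [p, q] (m.α r)‖
        + ‖arcParam [p, q] (m.α r) - arcParam Y (m.β r)‖ :=
        norm_sub_le_norm_sub_add_norm_sub _ _ _
    _ ≤ d + d := by
      refine add_le_add ?_ (m.norm_sub_le r hr)
      rw [hA]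
      refine norm_lineMap_sub_lineMap_le ?_ ?_ hμ <;> rw [norm_sub_rev]
      exacts [m.norm_sub_le r₁ hr₁, m.norm_sub_le r₂ hr₂]
    _ = 2 * d := (two_mul d).symm

theorem frechetDist_subpolyline_le (m : FrechetMatching [p, q] Y 0 1 d) {i j : ℕ} (hij : i < j)
    (hj : j < Y.length) :
    frechetDist [Y.getD i 0, Y.getD j 0] ((Y.drop i).take (j - i + 1)) ≤ 2 * d := by
  obtain ⟨r₁, r₂, hr₁, hr₁₂, hr₂, hβr₁, hβr₂⟩ := m.exists_β_eq hij hj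
  have hsub : Icc r₁ r₂ ⊆ Icc 0 1 := Icc_subset_Icc hr₁ hr₂
  obtain ⟨μ, hμc, hμm, hμ₀, hμ₁, hαμ⟩ := exists_lineMap_reparam (f := fun r => m.α r - 1) hr₁₂
    ((m.continuousOn_α.mono hsub).sub continuousOn_const)
    (fun s hs t ht hst => sub_le_sub_right (m.monotoneOn_α (hsub hs) (hsub ht) hst) 1)
  have hY {k : ℕ} {r : ℝ} (h : m.β r = k + 1) : arcParam Y (m.β r) = Y.getD k 0 := by
    rw [h, ← Nat.cast_succ, arcParam_natCast, Nat.succ_sub_one]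
  refine frechetDist_le (a := r₁) (b := r₂)
    { α := fun r => 1 + μ r
      β := fun r => m.β r - i
      continuousOn_α := continuousOn_const.add hμc
      continuousOn_β := (m.continuousOn_β.mono hsub).sub continuousOn_const
      monotoneOn_α := fun s hs t ht hst => (add_le_add_iff_left 1).2 (hμm hs ht hst)
      monotoneOn_β := fun s hs t ht hst =>
        sub_le_sub_right (m.monotoneOn_β (hsub hs) (hsub ht) hst) _
      α_left := by simp [hμ₀]
      β_left := by simp [hβr₁]
      α_right := by norm_num [hμ₁]
      β_right := by
        rw [hβr₂, List.length_take, List.length_drop, min_eq_left (by omega)]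
        push_cast [hij.le]
        ring
      norm_sub_le := fun r hr => ?_ } hr₁₂.le
  have hμr : μ r ∈ Icc 0 1 := by
    rw [← hμ₀, ← hμ₁]
    exact ⟨hμm (left_mem_Icc.2 hr₁₂.le) hr hr.1, hμm hr (right_mem_Icc.2 hr₁₂.le) hr.2⟩
  have hβr : m.β r ∈ Icc (i + 1 : ℝ) (j + 1) := by
    rw [← hβr₁, ← hβr₂]
    exact ⟨m.monotoneOn_β (hsub (left_mem_Icc.2 hr₁₂.le)) (hsub hr) hr.1,
      m.monotoneOn_β (hsub hr) (hsub (right_mem_Icc.2 hr₁₂.le)) hr.2⟩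
  rw [arcParam_pair _ _ (by linarith [hμr.1]) (by linarith [hμr.2]), add_sub_cancel_left,
    arcParam_take _ (by linarith [hβr.1]) (by push_cast [hij.le]; linarith [hβr.2]),
    arcParam_drop _ _ (by linarith [hβr.1]), sub_add_cancel, ← hY hβr₁, ← hY hβr₂]
  exact m.norm_lineMap_sub_arcParam_le (hsub (left_mem_Icc.2 hr₁₂.le))
    (hsub (right_mem_Icc.2 hr₁₂.le)) (hsub hr) hμr (hαμ r hr)

end FrechetMatching

lemma frechetDist_subpolyline_le {p q : Pt} {Y : List Pt} {δ : ℝ}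
    (h : frechetDist [p, q] Y ≤ δ) {i j : ℕ} (hij : i < j) (hj : j < Y.length) :
    frechetDist [Y.getD i 0, Y.getD j 0] ((Y.drop i).take (j - i + 1)) ≤ 2 * δ := by
  refine le_of_forall_gt_imp_ge_of_dense fun c hc => ?_
  obtain ⟨m⟩ := FrechetMatching.nonempty_of_frechetDist_lt (by simp)
    (List.ne_nil_of_length_pos (by omega)) (h.trans_lt (by linarith : δ < c / 2))
  linarith [m.frechetDist_subpolyline_le hij hj]

section Simplification

variable {δ : ℝ} {B' : Set Pt} {L : List Pt}

def IsInducedSegment (B' : Set Pt) (L : List Pt) (p q : ℕ) : Prop :=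
  p < q ∧ q < L.length ∧ L.getD p 0 ∈ B' ∧ L.getD q 0 ∈ B' ∧
    ∀ r, p < r → r < q → L.getD r 0 ∉ B'

def IsValidSimplificationOf (L : List Pt) (δ : ℝ) (B' : Set Pt) : Prop :=
  L.getD 0 0 ∈ B' ∧ L.getD (L.length - 1) 0 ∈ B' ∧
    ∀ p q, IsInducedSegment B' L p q → IsShortcut δ L p q

lemma isValidSimplification_iff {I : PBSInstance} :
    IsValidSimplification I δ B' ↔
      B' ⊆ I.B ∧ ∀ i, IsValidSimplificationOf (I.line i).pts δ B' := by
  refine and_congr_right fun _ => forall_congr' fun i =>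
    and_congr_right fun _ => and_congr_right fun _ => ?_
  exact ⟨fun h p q ⟨hpq, hq, hp, hq', hr⟩ => ⟨hpq, hq, h p q hpq hq hp hq' hr⟩,
    fun h p q hpq hq hp hq' hr => (h p q ⟨hpq, hq, hp, hq', hr⟩).2.2⟩

lemma IsInducedSegment.left_unique {u u' v : ℕ} (h : IsInducedSegment B' L u v)
    (h' : IsInducedSegment B' L u' v) : u = u' := by
  by_contra hne
  rcases lt_or_gt_of_ne hne with hlt | hlt
  · exact h.2.2.2.2 u' hlt h'.1 h'.2.2.1
  · exact h'.2.2.2.2 u hlt h.1 h.2.2.1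

lemma exists_isInducedSegment_around (h₀ : L.getD 0 0 ∈ B')
    (h₁ : L.getD (L.length - 1) 0 ∈ B') {k : ℕ} (hk : k + 1 < L.length) :
    ∃ u v, IsInducedSegment B' L u v ∧ u ≤ k ∧ k < v := by
  classical
  have hex : ∃ v, k < v ∧ v < L.length ∧ L.getD v 0 ∈ B' :=
    ⟨L.length - 1, by omega, by omega, h₁⟩
  obtain ⟨hkv, hvL, hv⟩ := Nat.find_spec hex
  have huk := Nat.findGreatest_le (P := fun r => L.getD r 0 ∈ B') k
  have hu := Nat.findGreatest_spec (P := fun r => L.getD r 0 ∈ B') (Nat.zero_le k) h₀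
  refine ⟨_, _, ⟨by omega, hvL, hu, hv, fun r hur hrv hr => ?_⟩, huk, hkv⟩
  rcases le_or_gt r k with hrk | hkr
  · exact Nat.findGreatest_is_greatest hur hrk hr
  · exact Nat.find_min hex hrv ⟨hkr, by omega, hr⟩

lemma IsInducedSegment.of_reverse {p q : ℕ} (h : IsInducedSegment B' L.reverse p q) :
    IsInducedSegment B' L (L.length - 1 - q) (L.length - 1 - p) := by
  obtain ⟨hpq, hq, hp, hq', hr⟩ := h
  rw [List.length_reverse] at hq
  rw [List.getD_reverse _ (by omega)] at hp hq'
  refine ⟨by omega, by omega, hq', hp, fun r h₁ h₂ hr' =>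
    hr (L.length - 1 - r) (by omega) (by omega) ?_⟩
  rwa [List.getD_reverse _ (by omega), show L.length - 1 - (L.length - 1 - r) = r by omega]

lemma IsShortcut.reverse {p q : ℕ} (h : IsShortcut δ L (L.length - 1 - q) (L.length - 1 - p))
    (hpq : p < q) (hq : q < L.length) : IsShortcut δ L.reverse p q := by
  refine ⟨hpq, by simpa using hq, ?_⟩
  have hsub : (L.reverse.drop p).take (q - p + 1) =
      ((L.drop (L.length - 1 - q)).take (q - p + 1)).reverse := by
    rw [List.drop_reverse, List.take_reverse, List.length_take, List.drop_take,
      min_eq_left (by omega)]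
    congr 3 <;> omega
  rw [hsub, List.getD_reverse _ (by omega), List.getD_reverse _ (by omega)]
  refine (frechetDist_reverse_le (L₁ := [_, _]) (by simp)
    (List.ne_nil_of_length_pos
      (by simp only [List.length_take, List.length_drop]; omega))).trans ?_
  simpa [show L.length - 1 - p - (L.length - 1 - q) + 1 = q - p + 1 by omega] using h.2.2

lemma IsValidSimplificationOf.reverse (h : IsValidSimplificationOf L δ B') :
    IsValidSimplificationOf L.reverse δ B' := by
  obtain ⟨h₀, h₁, hseg⟩ := h
  rcases eq_or_ne L [] with rfl | hL
  · exact ⟨h₀, h₁, fun p q hs => absurd hs.2.1 (by simp)⟩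
  have hn := List.length_pos_iff.2 hL
  refine ⟨?_, ?_, fun p q hs => (hseg _ _ hs.of_reverse).reverse hs.1 (by simpa using hs.2.1)⟩
  · rwa [List.getD_reverse _ hn, Nat.sub_zero]
  · rwa [List.length_reverse, List.getD_reverse _ (by omega), Nat.sub_self]

lemma isValidSimplificationOf_orientedLine_iff {I : PBSInstance} {ori : Fin I.numLines → Bool}
    {i : Fin I.numLines} :
    IsValidSimplificationOf (orientedLine I ori i) δ B' ↔
      IsValidSimplificationOf (I.line i).pts δ B' := by
  unfold orientedLine
  split
  · rfl
  · exact ⟨fun h => by simpa using h.reverse, IsValidSimplificationOf.reverse⟩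

lemma isShortcut_succ (hδ : 0 ≤ δ) {p : ℕ} (hp : p + 1 < L.length) :
    IsShortcut δ L p (p + 1) := by
  refine ⟨p.lt_succ_self, hp, ?_⟩
  rw [show p + 1 - p + 1 = 2 by omega, List.drop_eq_getElem_cons (by omega),
    List.drop_eq_getElem_cons hp, List.getD_eq_getElem _ _ (by omega), List.getD_eq_getElem _ _ hp,
    List.take_succ_cons, List.take_succ_cons, List.take_zero]
  obtain ⟨m⟩ := FrechetMatching.nonempty_refl (L := [L[p], L[p + 1]]) (by simp)
  exact (m.frechetDist_le zero_le_one).trans hδ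

lemma isValidSimplificationOf_of_forall_mem (hδ : 0 ≤ δ) (hL : L ≠ []) (hB : ∀ x ∈ L, x ∈ B') :
    IsValidSimplificationOf L δ B' := by
  have hget {n} (hn : n < L.length) : L.getD n 0 ∈ B' :=
    hB _ (List.getD_eq_getElem _ _ hn ▸ List.getElem_mem hn)
  have hpos := List.length_pos_iff.2 hL
  refine ⟨hget hpos, hget (by omega), fun p q ⟨hpq, hq, _, _, hr⟩ => ?_⟩
  obtain rfl : q = p + 1 := by
    by_contra h
    exact hr (p + 1) (by omega) (by omega) (hget (by omega))
  exact isShortcut_succ hδ hq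

lemma IsShortcut.restrict {u v s t : ℕ} (h : IsShortcut δ L u v) (hus : u ≤ s) (hst : s < t)
    (htv : t ≤ v) : IsShortcut (2 * δ) L s t := by
  obtain ⟨-, hv, hF⟩ := h
  have hget {r} (hr : r - u < v - u + 1) (hur : u ≤ r) :
      ((L.drop u).take (v - u + 1)).getD (r - u) 0 = L.getD r 0 := by
    simp [List.getD_eq_getElem?_getD, List.getElem?_take_of_lt hr, List.getElem?_drop,
      Nat.add_sub_cancel' hur]
  have hsub : (((L.drop u).take (v - u + 1)).drop (s - u)).take (t - u - (s - u) + 1) =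
      (L.drop s).take (t - s + 1) := by
    rw [List.drop_take, List.drop_drop, List.take_take, Nat.add_sub_cancel' hus]
    congr 1
    omega
  refine ⟨hst, by omega, ?_⟩
  have := frechetDist_subpolyline_le hF (i := s - u) (j := t - u) (by omega)
    (by rw [List.length_take, List.length_drop]; omega)
  rwa [hget (by omega) hus, hget (by omega) (by omega), hsub] at this

theorem isValidSimplificationOf_of_shortcuts (h₀ : L.getD 0 0 ∈ B')
    (hcover : ∀ k, k + 1 < L.length →
      ∃ u v, u ≤ k ∧ k < v ∧ IsShortcut δ L u v ∧ L.getD v 0 ∈ B') :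
    IsValidSimplificationOf L (2 * δ) B' := by
  refine ⟨h₀, ?_, fun s t ⟨hst, ht, _, _, hr⟩ => ?_⟩
  · rcases lt_or_ge 1 L.length with hL | hL
    · obtain ⟨u, v, -, hv, ⟨-, hvL, -⟩, hvB⟩ := hcover (L.length - 2) (by omega)
      rwa [show L.length - 1 = v by omega]
    · rwa [show L.length - 1 = 0 by omega]
  · obtain ⟨u, v, hus, hsv, hsc, hvB⟩ := hcover s (by omega)
    have htv : t ≤ v := by
      by_contra h
      exact hr v hsv (by omega) hvB
    exact hsc.restrict hus hst htv

end Simplification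

section StarCover

variable {I : PBSInstance} {ori : Fin I.numLines → Bool}

lemma orientedLine_nodup (i : Fin I.numLines) : (orientedLine I ori i).Nodup := by
  unfold orientedLine
  split
  exacts [(I.line i).nodup, List.nodup_reverse.2 (I.line i).nodup]

lemma orientedLine_getD_inj {i : Fin I.numLines} {v v' : ℕ} (hv : v < (orientedLine I ori i).length)
    (hv' : v' < (orientedLine I ori i).length)
    (h : (orientedLine I ori i).getD v 0 = (orientedLine I ori i).getD v' 0) : v = v' := by
  rw [List.getD_eq_getElem _ _ hv, List.getD_eq_getElem _ _ hv'] at h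
  exact (orientedLine_nodup i).getElem_inj_iff.1 h

variable (I) in
lemma isValidSimplification_bends : IsValidSimplification I I.δ I.B :=
  isValidSimplification_iff.2 ⟨subset_rfl, fun i => isValidSimplificationOf_of_forall_mem I.δ_pos.le
    (List.ne_nil_of_length_pos (by have := (I.line i).two_le; omega)) (I.bends_mem i)⟩

lemma IsValidSimplification.orientedLine {δ : ℝ} {B₀ : Set Pt}
    (h : IsValidSimplification I δ B₀) (i : Fin I.numLines) :
    IsValidSimplificationOf (orientedLine I ori i) δ B₀ :=
  isValidSimplificationOf_orientedLine_iff.2 ((isValidSimplification_iff.1 h).2 i)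

lemma PBSStar.covers.exists_isShortcut {s : PBSStar I ori} {i : Fin I.numLines} {k : ℕ}
    (h : s.covers i k) :
    ∃ u v, u ≤ k ∧ k < v ∧ IsShortcut I.δ (orientedLine I ori i) u v ∧
      (orientedLine I ori i).getD v 0 = s.central := by
  obtain ⟨u, hu, v, hv, hvc, huk, hkv⟩ := h
  obtain ⟨v', hv', hv'c, hsc⟩ := s.sc_spec i u hu
  obtain rfl : v = v' := orientedLine_getD_inj hv hv' (hvc.trans hv'c.symm)
  exact ⟨u, v, huk, hkv, hsc, hvc⟩

variable (I ori) in
def firstBends : Set Pt := range fun i => (orientedLine I ori i).getD 0 0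

lemma firstBends_subset {δ : ℝ} {B₀ : Set Pt} (h : IsValidSimplification I δ B₀) :
    firstBends I ori ⊆ B₀ :=
  range_subset_iff.2 fun i => (h.orientedLine i).1

theorem isValidSimplification_of_isStarCover {C : Set (PBSStar I ori)} (hC : IsStarCover I ori C) :
    IsValidSimplification I (2 * I.δ) (PBSStar.central '' C ∪ firstBends I ori) := by
  refine isValidSimplification_iff.2 ⟨union_subset ?_ ?_, fun i =>
    (isValidSimplificationOf_orientedLine_iff (ori := ori)).1 ?_⟩
  · rintro _ ⟨s, -, rfl⟩
    exact s.central_mem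
  · exact firstBends_subset (isValidSimplification_bends I)
  · refine isValidSimplificationOf_of_shortcuts (Or.inr ⟨i, rfl⟩) fun k hk => ?_
    obtain ⟨s, hs, hcov⟩ := hC i k hk
    obtain ⟨u, v, huk, hkv, hsc, hv⟩ := hcov.exists_isShortcut
    exact ⟨u, v, huk, hkv, hsc, Or.inl ⟨s, hs, hv.symm⟩⟩

variable (I) in
lemma exists_isValidSimplification_ncard_eq_optPBS :
    ∃ B₀, IsValidSimplification I I.δ B₀ ∧ B₀.ncard = optPBS I := by
  have hne : {k | ∃ B₀, IsValidSimplification I I.δ B₀ ∧ B₀.ncard = k}.Nonempty :=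
    ⟨_, _, isValidSimplification_bends I, rfl⟩
  exact Nat.sInf_mem hne

open Classical in
/-- Its shortcuts are the segments of the simplifications induced by `B₀` that end at `b`. -/
noncomputable def PBSStar.ofSimplification {B₀ : Set Pt} (hB₀ : IsValidSimplification I I.δ B₀)
    (b : B₀) : PBSStar I ori where
  central := b
  central_mem := hB₀.1 b.2
  sc i := if h : ∃ u v, IsInducedSegment B₀ (orientedLine I ori i) u v ∧
      (orientedLine I ori i).getD v 0 = b then some h.choose else none
  sc_spec i u hu := by
    split_ifs at hu with h
    obtain ⟨v, hseg, hv⟩ := h.choose_spec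
    rw [← Option.some_inj.1 hu]
    exact ⟨v, hseg.2.1, hv, (hB₀.orientedLine i).2.2 _ _ hseg⟩

lemma isStarCover_range_ofSimplification {B₀ : Set Pt} (hB₀ : IsValidSimplification I I.δ B₀) :
    IsStarCover I ori (range (PBSStar.ofSimplification hB₀)) := by
  intro i k hk
  obtain ⟨u, v, hseg, huk, hkv⟩ :=
    exists_isInducedSegment_around (hB₀.orientedLine i).1 (hB₀.orientedLine i).2.1 hk
  have hex : ∃ u' v', IsInducedSegment B₀ (orientedLine I ori i) u' v' ∧
      (orientedLine I ori i).getD v' 0 = (orientedLine I ori i).getD v 0 := ⟨u, v, hseg, rfl⟩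
  obtain ⟨v', hseg', hv'⟩ := hex.choose_spec
  obtain rfl : v' = v := orientedLine_getD_inj hseg'.2.1 hseg.2.1 hv'
  refine ⟨_, ⟨⟨_, hseg.2.2.2.1⟩, rfl⟩, hex.choose, dif_pos hex,
    v', hseg.2.1, rfl, hseg'.left_unique hseg ▸ huk, hkv⟩

variable (I ori) in
lemma optStCo_le_optPBS : optStCo I ori ≤ optPBS I := by
  obtain ⟨B₀, hB₀, hcard⟩ := exists_isValidSimplification_ncard_eq_optPBS I
  have : Finite B₀ := (I.B.finite_toSet.subset hB₀.1).to_subtype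
  calc optStCo I ori ≤ (range (PBSStar.ofSimplification (ori := ori) hB₀)).ncard := by
        unfold optStCo
        exact Nat.sInf_le ⟨_, finite_range _, isStarCover_range_ofSimplification hB₀, rfl⟩
    _ ≤ B₀.ncard := by
        rw [← Nat.card_coe_set_eq, ← Nat.card_coe_set_eq]
        exact Finite.card_range_le _
    _ = optPBS I := hcard

lemma ncard_central_image_union_firstBends_le {C : Set (PBSStar I ori)} (hC : C.Finite) :
    (PBSStar.central '' C ∪ firstBends I ori).ncard ≤ C.ncard + optPBS I := by
  obtain ⟨B₀, hB₀, hcard⟩ := exists_isValidSimplification_ncard_eq_optPBS I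
  calc _ ≤ (PBSStar.central '' C).ncard + (firstBends I ori).ncard := ncard_union_le _ _
    _ ≤ C.ncard + B₀.ncard := add_le_add (ncard_image_le hC)
        (ncard_le_ncard (firstBends_subset hB₀) (I.B.finite_toSet.subset hB₀.1))
    _ = C.ncard + optPBS I := by rw [hcard]

end StarCover

/-- Lemma 4.4: given a star cover `C`, the set `B_central ∪ B_first` of central bends of
the stars of `C` together with the first bends of all (oriented) polylines is a valid
simplification of the relaxed instance with threshold `2δ`; moreover, if
`|C| ≤ α·OPT_StCo` for some `α ≥ 1`, then `|B_central ∪ B_first| ≤ (α + 1)·OPT_PBS`. -/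
theorem starCover_to_simplification (I : PBSInstance) (ori : Fin I.numLines → Bool)
    (C : Set (PBSStar I ori)) (hCfin : C.Finite) (hC : IsStarCover I ori C) :
    IsValidSimplification I (2 * I.δ)
      ((PBSStar.central '' C) ∪ Set.range (fun i => (orientedLine I ori i).getD 0 0)) ∧
    ∀ α : ℝ, 1 ≤ α → (C.ncard : ℝ) ≤ α * (optStCo I ori : ℝ) →
      (((PBSStar.central '' C) ∪
          Set.range (fun i => (orientedLine I ori i).getD 0 0)).ncard : ℝ)
        ≤ (α + 1) * (optPBS I : ℝ) := by
  refine ⟨isValidSimplification_of_isStarCover hC, fun α hα hCα => ?_⟩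
  have hSt : (optStCo I ori : ℝ) ≤ optPBS I := by exact_mod_cast optStCo_le_optPBS I ori
  calc _ ≤ (C.ncard : ℝ) + optPBS I := by
        exact_mod_cast ncard_central_image_union_firstBends_le hCfin
    _ ≤ α * optPBS I + optPBS I := by grw [hCα, hSt]
    _ = (α + 1) * optPBS I := by ring
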